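/- If S is a set of sets of schemes in contexts, then ∀̃ S = { t_Γ normalizing | for all t', terms a, and E ∈ S, if t_Γ ↠* (Λx t')_Γ then ([a/x]t')_Γ ∈ E } is a reducibility candidate. -/
import Mathlib


/-! # The dependently-typed scheme-calculus

Many-sorted first-order terms are represented by an (unsorted) term language with
variables, constants (function symbols) and binary application; types (propositions)
are atomic propositions, implications and universal quantifications over term
variables. -/

/-- First-order terms. -/
inductive Tm : Type
  | var : ℕ → Tm
  | fn : ℕ → Tm
  | app : Tm → Tm → Tm
deriving DecidableEq

/-- Free variables of a term. -/
def Tm.fv : Tm → Finset ℕ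
  | .var x => {x}
  | .fn _ => ∅
  | .app a b => a.fv ∪ b.fv

/-- Simultaneous substitution on terms. -/
def Tm.substF : Tm → (ℕ → Tm) → Tm
  | .var x, σ => σ x
  | .fn k, _ => .fn k
  | .app a b, σ => .app (a.substF σ) (b.substF σ)

/-- Substitution of a term for a term variable. -/
def Tm.subst (x : ℕ) (a : Tm) (b : Tm) : Tm :=
  b.substF fun w => if w = x then a else .var w

/-- Types (propositions): atomic propositions `P(a)`, implication, universal
quantification over a term variable. -/
inductive Ty : Type
  | atom : ℕ → Tm → Ty
  | arr : Ty → Ty → Ty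
  | all : ℕ → Ty → Ty
deriving DecidableEq

/-- Free term variables of a type. -/
def Ty.fv : Ty → Finset ℕ
  | .atom _ a => a.fv
  | .arr A B => A.fv ∪ B.fv
  | .all x A => A.fv.erase x

/-- A variable fresh for a finite set of variables. -/
def fresh (s : Finset ℕ) : ℕ := s.sup id + 1

/-- Capture-avoiding simultaneous substitution on types (bound variables are renamed
when a capture would occur). -/
def Ty.substF : Ty → (ℕ → Tm) → Ty
  | .atom p a, σ => .atom p (a.substF σ)
  | .arr A B, σ => .arr (A.substF σ) (B.substF σ)
  | .all y A, σ =>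
      let captured := (A.fv.erase y).biUnion fun w => (σ w).fv
      if y ∈ captured then
        let z := fresh (captured ∪ A.fv)
        .all z (A.substF fun w => if w = y then .var z else σ w)
      else
        .all y (A.substF fun w => if w = y then .var y else σ w)

/-- Capture-avoiding substitution `[a/x]A` of a term for a term variable in a type. -/
def Ty.subst (x : ℕ) (a : Tm) (A : Ty) : Ty :=
  A.substF fun w => if w = x then a else .var w

/-- Schemes of the dependently-typed scheme-calculus: the canonical variable `⟨A⟩` of
type `A`, abstraction `λ_A t`, application, term abstraction `Λx t`, and application of
a scheme to a term. -/
inductive Schm : Type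
  | var : Ty → Schm
  | lam : Ty → Schm → Schm
  | app : Schm → Schm → Schm
  | tlam : ℕ → Schm → Schm
  | tapp : Schm → Tm → Schm
deriving DecidableEq

/-- Free term variables of a scheme. -/
def Schm.tfv : Schm → Finset ℕ
  | .var A => A.fv
  | .lam A t => A.fv ∪ t.tfv
  | .app t u => t.tfv ∪ u.tfv
  | .tlam x t => t.tfv.erase x
  | .tapp t a => t.tfv ∪ a.fv

/-- Capture-avoiding simultaneous substitution of terms for term variables in a
scheme. -/
def Schm.tsubstF : Schm → (ℕ → Tm) → Schm
  | .var A, σ => .var (A.substF σ)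
  | .lam A t, σ => .lam (A.substF σ) (t.tsubstF σ)
  | .app t u, σ => .app (t.tsubstF σ) (u.tsubstF σ)
  | .tlam x t, σ =>
      let captured := (t.tfv.erase x).biUnion fun w => (σ w).fv
      if x ∈ captured then
        let z := fresh (captured ∪ t.tfv)
        .tlam z (t.tsubstF fun w => if w = x then .var z else σ w)
      else
        .tlam x (t.tsubstF fun w => if w = x then .var x else σ w)
  | .tapp t a, σ => .tapp (t.tsubstF σ) (a.substF σ)

/-- Capture-avoiding substitution `[a/x]t` of a term for a term variable in a scheme. -/
def Schm.tsubst (x : ℕ) (a : Tm) (t : Schm) : Schm :=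
  t.tsubstF fun w => if w = x then a else .var w

/-- Typing (natural deduction modulo the congruence `cong`); contexts are finite SETS of
types. -/
inductive Typed (cong : Ty → Ty → Prop) : Finset Ty → Schm → Ty → Prop
  | var {Γ A} : A ∈ Γ → Typed cong Γ (.var A) A
  | lam {Γ A B t} : Typed cong (insert A Γ) t B → Typed cong Γ (.lam A t) (.arr A B)
  | app {Γ A B t u} : Typed cong Γ t (.arr A B) → Typed cong Γ u A →
      Typed cong Γ (.app t u) B
  | tlam {Γ A x t} : Typed cong Γ t A → (∀ B ∈ Γ, x ∉ Ty.fv B) →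
      Typed cong Γ (.tlam x t) (.all x A)
  | tapp {Γ A x t a} : Typed cong Γ t (.all x A) →
      Typed cong Γ (.tapp t a) (Ty.subst x a A)
  | conv {Γ A B t} : Typed cong Γ t A → cong A B → Typed cong Γ t B

/-- `cong` is a congruence on types: an equivalence relation stable by substitution of
terms for term variables. -/
def IsTyCong (cong : Ty → Ty → Prop) : Prop :=
  Equivalence cong ∧ ∀ x a A B, cong A B → cong (Ty.subst x a A) (Ty.subst x a B)

def Ty.isAtom : Ty → Prop | .atom _ _ => True | _ => False
def Ty.isArr : Ty → Prop | .arr _ _ => True | _ => False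
def Ty.isAll : Ty → Prop | .all _ _ => True | _ => False

/-- The congruence is non-confusing. -/
def NonConfusing (cong : Ty → Ty → Prop) : Prop :=
  (∀ A B, cong A B → (A.isAtom ∨ B.isAtom) ∨ (A.isArr ∧ B.isArr) ∨ (A.isAll ∧ B.isAll)) ∧
  (∀ A A' B B', cong (.arr A A') (.arr B B') → cong A B ∧ cong A' B') ∧
  (∀ x A B, cong (.all x A) (.all x B) → cong A B)

/-- `SSubst u A Γ t v` means `v ∈ [u/A]_Γ t`: the non-deterministic substitution of the
scheme `u` for the canonical variable `⟨A⟩` in `t` with respect to the context `Γ`. -/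
inductive SSubst (u : Schm) (A : Ty) : Finset Ty → Schm → Schm → Prop
  | varKeep {Γ} : A ∈ Γ → SSubst u A Γ (.var A) (.var A)
  | varSub {Γ} : SSubst u A Γ (.var A) u
  | varOther {Γ B} : B ≠ A → SSubst u A Γ (.var B) (.var B)
  | lam {Γ C t t'} : SSubst u A (insert C Γ) t t' → SSubst u A Γ (.lam C t) (.lam C t')
  | app {Γ t t' s s'} : SSubst u A Γ t t' → SSubst u A Γ s s' →
      SSubst u A Γ (.app t s) (.app t' s')
  | tlam {Γ x x' t t'} (hx : x' ∉ (Schm.tlam x t).tfv ∪ u.tfv ∪ A.fv) :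
      SSubst u A Γ (Schm.tsubst x (.var x') t) t' →
      SSubst u A Γ (.tlam x t) (.tlam x' t')
  | tapp {Γ t t' a} : SSubst u A Γ t t' → SSubst u A Γ (.tapp t a) (.tapp t' a)

/-- One-step top-level β-reduction. -/
inductive TopRed : Finset Ty → Schm → Schm → Prop
  | beta {Γ B t u v} : SSubst u B Γ t v → TopRed Γ (.app (.lam B t) u) v
  | tbeta {Γ x t a} : TopRed Γ (.tapp (.tlam x t) a) (Schm.tsubst x a t)

/-- One-step β-reduction: contextual closure of top-level reduction. -/
inductive Red : Finset Ty → Schm → Schm → Prop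
  | top {Γ t u} : TopRed Γ t u → Red Γ t u
  | appL {Γ t t' u} : Red Γ t t' → Red Γ (.app t u) (.app t' u)
  | appR {Γ t u u'} : Red Γ u u' → Red Γ (.app t u) (.app t u')
  | tappL {Γ t t' a} : Red Γ t t' → Red Γ (.tapp t a) (.tapp t' a)
  | lam {Γ A t t'} : Red (insert A Γ) t t' → Red Γ (.lam A t) (.lam A t')

/-- Multi-step β-reduction. -/
def RedStar (Γ : Finset Ty) : Schm → Schm → Prop := Relation.ReflTransGen (Red Γ)

/-! ## Minimal substitution and weak minimal reduction -/

/-- Size of a scheme. -/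
def Schm.size : Schm → ℕ
  | .var _ => 1
  | .lam _ t => t.size + 1
  | .app t u => t.size + u.size + 1
  | .tlam _ t => t.size + 1
  | .tapp t _ => t.size + 1

/-- Renaming of a free term variable `y` to `z` in a type (stopping at binders of `y`). -/
def Ty.renameV (y z : ℕ) : Ty → Ty
  | .atom p a => .atom p (a.substF fun w => if w = y then .var z else .var w)
  | .arr A B => .arr (A.renameV y z) (B.renameV y z)
  | .all w A => if w = y then .all w A else .all w (A.renameV y z)

/-- Renaming of a free term variable `y` to `z` in a scheme. -/
def Schm.renameV (y z : ℕ) : Schm → Schm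
  | .var A => .var (A.renameV y z)
  | .lam A t => .lam (A.renameV y z) (t.renameV y z)
  | .app t u => .app (t.renameV y z) (u.renameV y z)
  | .tlam x t => if x = y then .tlam x t else .tlam x (t.renameV y z)
  | .tapp t a => .tapp (t.renameV y z) (a.substF fun w => if w = y then .var z else .var w)

theorem Schm.size_renameV (y z : ℕ) (t : Schm) : (t.renameV y z).size = t.size := by
  induction t with
  | var A => rfl
  | lam A t ih => simp [Schm.renameV, Schm.size, ih]
  | app t u iht ihu => simp [Schm.renameV, Schm.size, iht, ihu]
  | tlam x t ih =>
      by_cases h : x = y <;> simp [Schm.renameV, Schm.size, h, ih]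
  | tapp t a ih => simp [Schm.renameV, Schm.size, ih]

/-- `svOcc A t Γ` holds when `t` has an occurrence of `⟨A⟩` that must be substituted with
respect to the context `Γ`. -/
def svOcc (A : Ty) : Schm → Finset Ty → Bool
  | .var B, Γ => decide (B = A ∧ A ∉ Γ)
  | .lam C t, Γ => svOcc A t (insert C Γ)
  | .app t u, Γ => svOcc A t Γ || svOcc A u Γ
  | .tlam _ t, Γ => svOcc A t Γ
  | .tapp t _, Γ => svOcc A t Γ

/-- Minimal (deterministic) substitution `min-[u/A]_Γ t`: the canonical variable `⟨A⟩` is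
substituted exactly when `A` is not in the current context; at `Λ`-abstractions the
bound term variable is renamed to a fresh one when a capture would actually occur. -/
def minSubst (u : Schm) (A : Ty) : Finset Ty → Schm → Schm
  | Γ, .var B => if B = A ∧ A ∉ Γ then u else .var B
  | Γ, .lam C t => .lam C (minSubst u A (insert C Γ) t)
  | Γ, .app t s => .app (minSubst u A Γ t) (minSubst u A Γ s)
  | Γ, .tlam x t =>
      if svOcc A t Γ ∧ x ∈ u.tfv then
        let z := fresh (t.tfv ∪ u.tfv ∪ {x})
        .tlam z (minSubst u A Γ (t.renameV x z))
      else .tlam x (minSubst u A Γ t)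
  | Γ, .tapp t a => .tapp (minSubst u A Γ t) a
termination_by Γ t => t.size
decreasing_by
  all_goals simp [Schm.size, Schm.size_renameV]
  all_goals omega

/-- One-step weak minimal reduction: the top-level minimal reductions, closed under the
left-hand side of (term) applications only (no reduction under abstractions nor in
argument position). -/
inductive WRed : Finset Ty → Schm → Schm → Prop
  | beta {Γ A t u} : WRed Γ (.app (.lam A t) u) (minSubst u A Γ t)
  | tbeta {Γ x t a} : WRed Γ (.tapp (.tlam x t) a) (Schm.tsubst x a t)
  | appL {Γ t t' u} : WRed Γ t t' → WRed Γ (.app t u) (.app t' u)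
  | tappL {Γ t t' a} : WRed Γ t t' → WRed Γ (.tapp t a) (.tapp t' a)

/-- Multi-step weak minimal reduction. -/
def WRedStar (Γ : Finset Ty) : Schm → Schm → Prop := Relation.ReflTransGen (WRed Γ)

/-- A scheme in context is normalizing if its (deterministic) weak minimal reduction
sequence is finite. -/
def Normalizing (Γ : Finset Ty) (t : Schm) : Prop :=
  Acc (fun a b : Schm => WRed Γ b a) t

/-! ## Reducibility candidates -/

/-- A scheme is neutral if it is not an introduction (not an abstraction). -/
def Neutral : Schm → Prop
  | .lam _ _ => False
  | .tlam _ _ => False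
  | _ => True

/-- Girard's reducibility candidates (for weak minimal reduction, on schemes in
contexts). -/
def IsCand (R : Set (Finset Ty × Schm)) : Prop :=
  (∀ p ∈ R, Normalizing p.1 p.2) ∧
  (∀ p ∈ R, ∀ u, WRedStar p.1 p.2 u → (p.1, u) ∈ R) ∧
  (∀ Γ t, Neutral t → (∀ u, WRed Γ t u → (Γ, u) ∈ R) → (Γ, t) ∈ R)

/-- The set `E ⇒̃ F`. -/
def ArrSet (E F : Set (Finset Ty × Schm)) : Set (Finset Ty × Schm) :=
  { p | Normalizing p.1 p.2 ∧
      ∀ A t' u, WRedStar p.1 p.2 (.lam A t') → (p.1, u) ∈ E →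
        (p.1, minSubst u A p.1 t') ∈ F }

/-- The set `∀̃ S`. -/
def AllSet (S : Set (Set (Finset Ty × Schm))) : Set (Finset Ty × Schm) :=
  { p | Normalizing p.1 p.2 ∧
      ∀ x t' (a : Tm) E, E ∈ S → WRedStar p.1 p.2 (.tlam x t') →
        (p.1, Schm.tsubst x a t') ∈ E }

/-! ## C-models -/

/-- A model valued in the algebra of reducibility candidates. -/
structure CModel where
  M : Type
  ifn : ℕ → M
  iap : M → M → M
  ipred : ℕ → M → Set (Finset Ty × Schm)
  cand : ∀ p m, IsCand (ipred p m)

/-- Denotation of terms. -/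
def evalTm (Md : CModel) (φ : ℕ → Md.M) : Tm → Md.M
  | .var x => φ x
  | .fn k => Md.ifn k
  | .app a b => Md.iap (evalTm Md φ a) (evalTm Md φ b)

/-- Denotation of types in a C-model. -/
def evalTy (Md : CModel) : Ty → (ℕ → Md.M) → Set (Finset Ty × Schm)
  | .atom p a, φ => Md.ipred p (evalTm Md φ a)
  | .arr A B, φ => ArrSet (evalTy Md A φ) (evalTy Md B φ)
  | .all x A, φ => AllSet { E | ∃ e : Md.M, E = evalTy Md A (Function.update φ x e) }

/-- The congruence `cong` is valid in the C-model `Md`. -/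
def CongValid (cong : Ty → Ty → Prop) (Md : CModel) : Prop :=
  ∀ A B (φ : ℕ → Md.M), cong A B → evalTy Md A φ = evalTy Md B φ

/-! ## Free sequences of substitutions -/

/-- Raw sequences of substitutions: minimal scheme-variable substitutions `[w/C]` and
term-variable substitutions `[a/x]`; the head is applied last. -/
inductive RSeq : Type
  | nil : RSeq
  | scons (C : Ty) (w : Schm) (ρ : RSeq) : RSeq
  | tcons (x : ℕ) (a : Tm) (ρ : RSeq) : RSeq

/-- The term variables occurring in a sequence of substitutions. -/
def RSeq.vars : RSeq → Finset ℕ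
  | .nil => ∅
  | .scons C w ρ => C.fv ∪ w.tfv ∪ ρ.vars
  | .tcons x a ρ => insert x (a.fv ∪ ρ.vars)

/-- Application of a sequence of substitutions to a term. -/
def RSeq.appTm : RSeq → Tm → Tm
  | .nil, a => a
  | .scons _ _ ρ, a => ρ.appTm a
  | .tcons x b ρ, a => Tm.subst x b (ρ.appTm a)

/-- Application of a sequence of substitutions to a type. -/
def RSeq.appTy : RSeq → Ty → Ty
  | .nil, A => A
  | .scons _ _ ρ, A => ρ.appTy A
  | .tcons x a ρ, A => Ty.subst x a (ρ.appTy A)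

/-- Application of a sequence of substitutions to a scheme, with respect to the context
`Γ`. -/
def RSeq.appS (Γ : Finset Ty) : RSeq → Schm → Schm
  | .nil, t => t
  | .scons C w ρ, t => minSubst w (ρ.appTy C) Γ (ρ.appS Γ t)
  | .tcons x a ρ, t => Schm.tsubst x a (ρ.appS Γ t)

/-- `ρ` is a free sequence of substitutions in `Γ, φ`. -/
def IsFree (Md : CModel) (Γ : Finset Ty) (φ : ℕ → Md.M) : RSeq → Prop
  | .nil => True
  | .scons C w ρ => (Γ, w) ∈ evalTy Md C φ ∧ IsFree Md Γ φ ρ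
  | .tcons x a ρ => x ∉ ρ.vars ∧ IsFree Md Γ φ ρ

theorem normalizing_of_star {Γ : Finset Ty} {t u : Schm}
    (h : Normalizing Γ t) (hr : WRedStar Γ t u) : Normalizing Γ u := by
  induction hr with
  | refl => exact h
  | tail _ step ih => exact ih.inv step

/-- if `S` is a set of sets of schemes in contexts, then `∀̃ S` is a
reducibility candidate. -/
theorem allSet_isCand (S : Set (Set (Finset Ty × Schm))) : IsCand (AllSet S) := by
  refine ⟨fun p hp => hp.1, ?_, ?_⟩
  · rintro ⟨Γ, t⟩ ⟨hn, hall⟩ u hu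
    exact ⟨normalizing_of_star hn hu, fun x t' a E hE hr =>
      hall x t' a E hE (hu.trans hr)⟩
  · intro Γ t hneut hred
    constructor
    · exact Acc.intro t fun u hu => (hred u hu).1
    · intro x t' a E hE hr
      rcases Relation.ReflTransGen.cases_head hr with heq | ⟨u, hstep, hrest⟩
      · subst heq; exact absurd hneut (by simp [Neutral])
      · exact (hred u hstep).2 x t' a E hE hrest
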